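/- arXiv:1804.11000 — 4 statements merged into one kernel-verified Lean document; each statement's English description precedes it below -/
import Mathlib

section
/- Let m be a positive integer and let ℓ ∈ {m-1, m}. Define p_{m,ℓ}(z) = sqrt(z) * ((1+sqrt(z))^{m+ℓ+1} + (1-sqrt(z))^{m+ℓ+1}) / ((1+sqrt(z))^{m+ℓ+1} - (1-sqrt(z))^{m+ℓ+1}). Then p_{m,ℓ} is a rational function of z of type (m, ℓ), i.e., a ratio of a polynomial of degree m and a polynomial of degree ℓ in z. -/
/-!
Writing `n = m + ℓ + 1` and `s = √z`, the odd powers of `s` cancel in `(1 + s)^n + (1 - s)^n` and the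
even ones in `(1 + s)^n - (1 - s)^n`, leaving `2 E(z)` and `2 s O(z)`, where `E` and `O` collect the
even- and odd-indexed binomial coefficients `n.choose k`. Hence the formula equals `E(z) / O(z)`, and
`E`, `O` have degrees `n / 2 = m` and `(n - 1) / 2 = ℓ`.
-/

open Finset Polynomial

theorem Finset.sum_range_two_mul {M : Type*} [AddCommMonoid M] (f : ℕ → M) (N : ℕ) :
    ∑ k ∈ range (2 * N), f k = ∑ j ∈ range N, (f (2 * j) + f (2 * j + 1)) := by
  induction N with
  | zero => simp
  | succ N ih => rw [mul_add_one, sum_range_succ, sum_range_succ, ih, sum_range_succ, add_assoc]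

section BinomParts

variable (R : Type*) [CommSemiring R]

-- Summing up to `n` rather than `n / 2` is harmless: `n.choose k = 0` for `k > n`.

noncomputable def evenBinomPoly (n : ℕ) : R[X] :=
  ∑ j ∈ range (n + 1), C (n.choose (2 * j) : R) * X ^ j

noncomputable def oddBinomPoly (n : ℕ) : R[X] :=
  ∑ j ∈ range (n + 1), C (n.choose (2 * j + 1) : R) * X ^ j

variable {R}

theorem coeff_evenBinomPoly (n j : ℕ) : (evenBinomPoly R n).coeff j = n.choose (2 * j) := by
  simp only [evenBinomPoly, finsetSum_coeff, coeff_C_mul_X_pow, sum_ite_eq, mem_range]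
  split_ifs with h
  · rfl
  · rw [Nat.choose_eq_zero_of_lt (by omega), Nat.cast_zero]

theorem coeff_oddBinomPoly (n j : ℕ) : (oddBinomPoly R n).coeff j = n.choose (2 * j + 1) := by
  simp only [oddBinomPoly, finsetSum_coeff, coeff_C_mul_X_pow, sum_ite_eq, mem_range]
  split_ifs with h
  · rfl
  · rw [Nat.choose_eq_zero_of_lt (by omega), Nat.cast_zero]

theorem natDegree_evenBinomPoly [CharZero R] (n : ℕ) : (evenBinomPoly R n).natDegree = n / 2 := by
  refine natDegree_eq_of_le_of_coeff_ne_zero ?_ ?_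
  · refine natDegree_le_iff_coeff_eq_zero.mpr fun j hj => ?_
    rw [coeff_evenBinomPoly, Nat.choose_eq_zero_of_lt (by omega), Nat.cast_zero]
  · rw [coeff_evenBinomPoly, Nat.cast_ne_zero]
    exact (Nat.choose_pos (by omega)).ne'

theorem natDegree_oddBinomPoly [CharZero R] (n : ℕ) :
    (oddBinomPoly R (n + 1)).natDegree = n / 2 := by
  refine natDegree_eq_of_le_of_coeff_ne_zero ?_ ?_
  · refine natDegree_le_iff_coeff_eq_zero.mpr fun j hj => ?_
    rw [coeff_oddBinomPoly, Nat.choose_eq_zero_of_lt (by omega), Nat.cast_zero]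
  · rw [coeff_oddBinomPoly, Nat.cast_ne_zero]
    exact (Nat.choose_pos (by omega)).ne'

theorem one_add_pow_eq_eval_sq (s : R) (n : ℕ) :
    (1 + s) ^ n = (evenBinomPoly R n).eval (s ^ 2) + s * (oddBinomPoly R n).eval (s ^ 2) := by
  set f : ℕ → R := fun k => s ^ k * n.choose k
  have binomial : (1 + s) ^ n = ∑ k ∈ range (2 * (n + 1)), f k := by
    rw [add_comm, add_pow]
    simp only [one_pow, mul_one]
    refine sum_subset (range_subset_range.mpr (by omega)) fun k _ hk => ?_
    rw [Nat.choose_eq_zero_of_lt (by simpa using hk), Nat.cast_zero, mul_zero]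
  rw [binomial, sum_range_two_mul, sum_add_distrib, evenBinomPoly, oddBinomPoly, eval_finsetSum,
    eval_finsetSum, mul_sum]
  congr 1 <;> refine sum_congr rfl fun j _ => ?_
  all_goals simp only [f, eval_mul, eval_C, eval_pow, eval_X]; ring

theorem one_sub_pow_eq_eval_sq {R : Type*} [CommRing R] (s : R) (n : ℕ) :
    (1 - s) ^ n = (evenBinomPoly R n).eval (s ^ 2) - s * (oddBinomPoly R n).eval (s ^ 2) := by
  rw [sub_eq_add_neg, one_add_pow_eq_eval_sq, neg_sq, neg_mul, ← sub_eq_add_neg]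

end BinomParts

theorem pade_sqrt_is_rational_of_type_general (m ℓ : ℕ) (hℓ : ℓ = m - 1 ∨ ℓ = m) :
    ∃ p q : Polynomial ℝ, p.natDegree = m ∧ q.natDegree = ℓ ∧
      ∀ z : ℝ, 0 < z →
        p.eval z / q.eval z =
          Real.sqrt z *
              ((1 + Real.sqrt z) ^ (m + ℓ + 1) + (1 - Real.sqrt z) ^ (m + ℓ + 1)) /
            ((1 + Real.sqrt z) ^ (m + ℓ + 1) - (1 - Real.sqrt z) ^ (m + ℓ + 1)) := by
  refine ⟨evenBinomPoly ℝ (m + ℓ + 1), oddBinomPoly ℝ (m + ℓ + 1), ?_, ?_, fun z hz => ?_⟩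
  · rw [natDegree_evenBinomPoly]; omega
  · rw [natDegree_oddBinomPoly]; omega
  obtain ⟨s, hs, rfl⟩ : ∃ s : ℝ, 0 < s ∧ z = s ^ 2 :=
    ⟨√z, Real.sqrt_pos.mpr hz, (Real.sq_sqrt hz.le).symm⟩
  rw [Real.sqrt_sq hs.le, one_add_pow_eq_eval_sq, one_sub_pow_eq_eval_sq]
  set p := (evenBinomPoly ℝ (m + ℓ + 1)).eval (s ^ 2)
  set q := (oddBinomPoly ℝ (m + ℓ + 1)).eval (s ^ 2)
  calc p / q = (2 * s) * p / ((2 * s) * q) := (mul_div_mul_left p q (by positivity)).symm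
    _ = _ := by congr 1 <;> ring

/-- The type `(m, ℓ)` Padé approximant of `√z` at `z = 1`, given by the explicit
formula, is a rational function of `z` of type `(m, ℓ)`. -/
theorem pade_sqrt_is_rational_of_type (m ℓ : ℕ) (hm : 0 < m) (hℓ : ℓ = m - 1 ∨ ℓ = m) :
    ∃ p q : Polynomial ℝ, p.natDegree = m ∧ q.natDegree = ℓ ∧
      ∀ z : ℝ, 0 < z →
        p.eval z / q.eval z =
          Real.sqrt z *
              ((1 + Real.sqrt z) ^ (m + ℓ + 1) + (1 - Real.sqrt z) ^ (m + ℓ + 1)) /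
            ((1 + Real.sqrt z) ^ (m + ℓ + 1) - (1 - Real.sqrt z) ^ (m + ℓ + 1)) :=
  pade_sqrt_is_rational_of_type_general m ℓ hℓ
end

section
/- With p_{m,ℓ}(z) = sqrt(z) * ((1+sqrt(z))^{m+ℓ+1} + (1-sqrt(z))^{m+ℓ+1}) / ((1+sqrt(z))^{m+ℓ+1} - (1-sqrt(z))^{m+ℓ+1}) and ℓ ∈ {m-1, m}, the zeros of p_{m,ℓ}(z) as a rational function of z are exactly the m numbers z = -tan^2((2j-1)π/(2(m+ℓ+1))) for j = 1, ..., m. -/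
/-!
Write `(1 + √z) ^ n = P(z) + √z Q(z)` with `n = m + ℓ + 1`; then `P / Q` is the approximant,
of type `(n / 2, (n - 1) / 2) = (m, ℓ)`. The identity `P ^ 2 - z Q ^ 2 = (1 - z) ^ n` together
with `P(1) ≠ 0` makes `P` and `Q` coprime. Substituting `√z = i tan θ` turns `(1 + √z) ^ n`
into `e^{inθ} / cos ^ n θ`, so `cos ^ n θ · P(-tan² θ) = cos nθ`: the angles
`θ = (2j - 1)π / (2n) ∈ (0, π / 2)` give `n / 2` distinct zeros, all that `deg P` allows.
-/

open Polynomial Real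

/-- `(1 + √X) ^ n = P + √X * Q` for `(P, Q) = binomParts R n`. -/
noncomputable def binomParts (R : Type*) [CommRing R] : ℕ → R[X] × R[X]
  | 0 => (1, 0)
  | n + 1 => ((binomParts R n).1 + X * (binomParts R n).2, (binomParts R n).1 + (binomParts R n).2)

section CommRing

variable {R : Type*} [CommRing R]

theorem aeval_binomParts_add {A : Type*} [CommRing A] [Algebra R A] (n : ℕ) (w : A) :
    aeval (w ^ 2) (binomParts R n).1 + w * aeval (w ^ 2) (binomParts R n).2 = (1 + w) ^ n := by
  induction n with
  | zero => simp [binomParts]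
  | succ n ih =>
    simp only [binomParts, map_add, map_mul, aeval_X]
    rw [pow_succ (1 + w), ← ih]
    ring

theorem aeval_binomParts_sub {A : Type*} [CommRing A] [Algebra R A] (n : ℕ) (w : A) :
    aeval (w ^ 2) (binomParts R n).1 - w * aeval (w ^ 2) (binomParts R n).2 = (1 - w) ^ n := by
  simpa [sub_eq_add_neg] using aeval_binomParts_add (R := R) n (-w)

theorem coeff_binomParts (n i : ℕ) :
    (binomParts R n).1.coeff i = n.choose (2 * i) ∧
      (binomParts R n).2.coeff i = n.choose (2 * i + 1) := by
  induction n generalizing i with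
  | zero => rcases i with _ | i <;> simp [binomParts, coeff_one, Nat.mul_succ]
  | succ n ih =>
    refine ⟨?_, ?_⟩
    · rcases i with _ | i
      · simp [binomParts, (ih 0).1]
      · simp only [binomParts, coeff_add, coeff_X_mul, (ih (i + 1)).1, (ih i).2]
        rw [show 2 * (i + 1) = 2 * i + 1 + 1 by ring, Nat.choose_succ_succ]
        push_cast
        ring
    · simp only [binomParts, coeff_add, (ih i).1, (ih i).2, Nat.choose_succ_succ]
      push_cast
      ring

theorem natDegree_binomParts_fst [CharZero R] (n : ℕ) :
    (binomParts R n).1.natDegree = n / 2 := by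
  refine le_antisymm (natDegree_le_iff_coeff_eq_zero.2 fun i hi => ?_)
    (le_natDegree_of_ne_zero ?_)
  · rw [(coeff_binomParts n i).1, Nat.choose_eq_zero_of_lt (by omega), Nat.cast_zero]
  · rw [(coeff_binomParts n _).1]
    exact_mod_cast (Nat.choose_pos (by omega)).ne'

theorem natDegree_binomParts_snd [CharZero R] (n : ℕ) :
    (binomParts R n).2.natDegree = (n - 1) / 2 := by
  rcases n with _ | n
  · simp [binomParts]
  refine le_antisymm (natDegree_le_iff_coeff_eq_zero.2 fun i hi => ?_)
    (le_natDegree_of_ne_zero ?_)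
  · rw [(coeff_binomParts _ i).2, Nat.choose_eq_zero_of_lt (by omega), Nat.cast_zero]
  · rw [(coeff_binomParts _ _).2]
    exact_mod_cast (Nat.choose_pos (by omega)).ne'

theorem binomParts_sq_sub (n : ℕ) :
    (binomParts R n).1 ^ 2 - X * (binomParts R n).2 ^ 2 = (1 - X) ^ n := by
  induction n with
  | zero => simp [binomParts]
  | succ n ih =>
    rw [pow_succ (1 - X), ← ih]
    simp only [binomParts]
    ring

end CommRing

section Field

variable {K : Type*} [Field K] [NeZero (2 : K)]

theorem isCoprime_binomParts (n : ℕ) : IsCoprime (binomParts K n).1 (binomParts K n).2 := by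
  have hP1 : (binomParts K n).1.eval 1 ≠ 0 := by
    rcases n with _ | n
    · simp [binomParts]
    have h := congr($(aeval_binomParts_add (R := K) (n + 1) (1 : K)) +
      $(aeval_binomParts_sub (R := K) (n + 1) (1 : K)))
    simp only [one_pow, coe_aeval_eq_eval, sub_self, zero_pow n.succ_ne_zero, add_zero,
      one_add_one_eq_two] at h
    intro h0
    rw [add_add_sub_cancel, h0, add_zero] at h
    exact pow_ne_zero _ two_ne_zero h.symm
  have hX : IsCoprime (binomParts K n).1 (1 - X) := by
    rw [← neg_sub, IsCoprime.neg_right_iff, ← C_1, isCoprime_comm,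
      (irreducible_X_sub_C 1).coprime_iff_not_dvd, dvd_iff_isRoot]
    exact hP1
  have := hX.pow_right (n := n)
  -- `(1 - X) ^ n = P * P + (-X * Q) * Q`
  rw [← binomParts_sq_sub, sub_eq_add_neg, sq, IsCoprime.mul_add_left_right_iff, ← neg_mul,
    sq, ← mul_assoc] at this
  exact this.of_mul_right_right

theorem binomParts_eval_div {w : K} (hw : w ≠ 0) (n : ℕ) :
    (binomParts K n).1.eval (w ^ 2) / (binomParts K n).2.eval (w ^ 2) =
      w * ((1 + w) ^ n + (1 - w) ^ n) / ((1 + w) ^ n - (1 - w) ^ n) := by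
  rw [← aeval_binomParts_add (R := K), ← aeval_binomParts_sub (R := K)]
  simp only [coe_aeval_eq_eval]
  rw [add_add_sub_cancel, add_sub_sub_cancel, ← two_mul, ← two_mul, mul_left_comm,
    mul_div_mul_left _ _ two_ne_zero, mul_div_mul_left _ _ hw]

end Field

theorem cos_pow_mul_eval_binomParts {θ : ℝ} (hθ : cos θ ≠ 0) (n : ℕ) :
    cos θ ^ n * (binomParts ℝ n).1.eval (-tan θ ^ 2) = cos (n * θ) ∧
      cos θ ^ n * tan θ * (binomParts ℝ n).2.eval (-tan θ ^ 2) = sin (n * θ) := by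
  induction n with
  | zero => simp [binomParts]
  | succ n ih =>
    have hsin : tan θ * cos θ = sin θ := tan_mul_cos hθ
    simp only [binomParts, eval_add, eval_mul, eval_X, Nat.cast_succ, add_one_mul, cos_add,
      sin_add]
    set a := (binomParts ℝ n).1.eval (-tan θ ^ 2)
    set b := (binomParts ℝ n).2.eval (-tan θ ^ 2)
    constructor
    · linear_combination cos θ * ih.1 - sin θ * ih.2 - cos θ ^ n * tan θ * b * hsin
    · linear_combination sin θ * ih.1 + cos θ * ih.2 + cos θ ^ n * a * hsin

theorem injOn_tan_sq : Set.InjOn (fun θ => tan θ ^ 2) (Set.Ioo 0 (π / 2)) := by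
  intro a ha b hb h
  have hpos : ∀ x ∈ Set.Ioo 0 (π / 2), 0 ≤ tan x := fun x hx =>
    (tan_pos_of_pos_of_lt_pi_div_two hx.1 hx.2).le
  have hneg : -(π / 2) < 0 := by linarith [pi_pos]
  exact injOn_tan ⟨hneg.trans ha.1, ha.2⟩ ⟨hneg.trans hb.1, hb.2⟩
    ((pow_left_inj₀ (hpos a ha) (hpos b hb) two_ne_zero).1 h)

noncomputable def cosZero (n j : ℕ) : ℝ := (2 * j - 1) * π / (2 * n)

theorem cosZero_mem_Ioo {n j : ℕ} (hj : 1 ≤ j) (hjn : 2 * j ≤ n) :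
    cosZero n j ∈ Set.Ioo 0 (π / 2) := by
  have h1 : (1 : ℝ) ≤ j := by exact_mod_cast hj
  have h2 : 2 * (j : ℝ) ≤ n := by exact_mod_cast hjn
  constructor
  · exact div_pos (by nlinarith [pi_pos]) (by linarith)
  · rw [cosZero, div_lt_iff₀ (by linarith)]
    nlinarith [pi_pos]

theorem cos_nat_mul_cosZero {n : ℕ} (hn : n ≠ 0) (j : ℕ) : cos (n * cosZero n j) = 0 := by
  rw [cos_eq_zero_iff]
  refine ⟨j - 1, ?_⟩
  rw [cosZero]
  field_simp
  push_cast
  ring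

theorem cosZero_injective {n : ℕ} (hn : n ≠ 0) : Function.Injective (cosZero n) := by
  intro i j h
  rw [cosZero, cosZero, div_left_inj' (by positivity), mul_left_inj' pi_ne_zero] at h
  exact_mod_cast (by linarith : (i : ℝ) = j)

theorem isRoot_binomParts_fst_iff (n : ℕ) (x : ℝ) :
    (binomParts ℝ n).1.IsRoot x ↔
      ∃ j ∈ Finset.Icc 1 (n / 2), x = -tan (cosZero n j) ^ 2 := by
  obtain rfl | hn := eq_or_ne n 0
  · simp [binomParts]
  have hmaps : Set.MapsTo (cosZero n) (Finset.Icc 1 (n / 2)) (Set.Ioo 0 (π / 2)) :=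
    fun j hj => cosZero_mem_Ioo (Finset.mem_Icc.1 hj).1 (by grind)
  have hroot : ∀ j ∈ Finset.Icc 1 (n / 2),
      (binomParts ℝ n).1.IsRoot (-tan (cosZero n j) ^ 2) := by
    intro j hj
    have hcos : cos (cosZero n j) ≠ 0 :=
      (cos_pos_of_mem_Ioo ⟨by linarith [(hmaps hj).1, pi_pos], (hmaps hj).2⟩).ne'
    have h := (cos_pow_mul_eval_binomParts hcos n).1
    rw [cos_nat_mul_cosZero hn] at h
    exact (mul_eq_zero.1 h).resolve_left (pow_ne_zero _ hcos)
  have hinj : Set.InjOn (fun j => -tan (cosZero n j) ^ 2) (Finset.Icc 1 (n / 2)) :=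
    neg_injective.comp_injOn (injOn_tan_sq.comp (cosZero_injective hn).injOn hmaps)
  have hP : (binomParts ℝ n).1 ≠ 0 := fun h => by
    simpa [h] using (coeff_binomParts (R := ℝ) n 0).1
  have hroots := roots_eq_of_natDegree_le_card_of_ne_zero
    (S := (Finset.Icc 1 (n / 2)).image fun j => -tan (cosZero n j) ^ 2)
    (Finset.forall_mem_image.2 hroot)
    (by rw [natDegree_binomParts_fst, Finset.card_image_of_injOn hinj, Nat.card_Icc]; omega)
    hP
  rw [← mem_roots hP, hroots, Finset.mem_val, Finset.mem_image]
  simp only [eq_comm]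

theorem pade_sqrt_zeros_general (m ℓ : ℕ) (hℓ : ℓ = m - 1 ∨ ℓ = m) :
    ∃ p q : Polynomial ℝ, p.natDegree = m ∧ q.natDegree = ℓ ∧ IsCoprime p q ∧
      (∀ z : ℝ, 0 < z →
        p.eval z / q.eval z =
          Real.sqrt z *
              ((1 + Real.sqrt z) ^ (m + ℓ + 1) + (1 - Real.sqrt z) ^ (m + ℓ + 1)) /
            ((1 + Real.sqrt z) ^ (m + ℓ + 1) - (1 - Real.sqrt z) ^ (m + ℓ + 1))) ∧
      (∀ x : ℝ, p.IsRoot x ↔ ∃ j ∈ Finset.Icc 1 m,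
        x = -(Real.tan ((2 * (j : ℝ) - 1) * Real.pi / (2 * ((m : ℝ) + ℓ + 1)))) ^ 2) := by
  have hm : (m + ℓ + 1) / 2 = m := by omega
  have hℓ' : (m + ℓ + 1 - 1) / 2 = ℓ := by omega
  refine ⟨_, _, (natDegree_binomParts_fst _).trans hm, (natDegree_binomParts_snd _).trans hℓ',
    isCoprime_binomParts _, fun z hz => ?_, fun x => ?_⟩
  · simpa only [sq_sqrt hz.le] using binomParts_eval_div (sqrt_pos.2 hz).ne' (m + ℓ + 1)
  · rw [isRoot_binomParts_fst_iff, hm]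
    simp [cosZero]

/-- The zeros of the type `(m, ℓ)` Padé approximant of `√z` at `z = 1`, as a rational
function of `z`, are exactly the `m` numbers `-tan²((2j-1)π/(2(m+ℓ+1)))`, `j = 1, …, m`. -/
theorem pade_sqrt_zeros (m ℓ : ℕ) (hm : 0 < m) (hℓ : ℓ = m - 1 ∨ ℓ = m) :
    ∃ p q : Polynomial ℝ, p.natDegree = m ∧ q.natDegree = ℓ ∧ IsCoprime p q ∧
      (∀ z : ℝ, 0 < z →
        p.eval z / q.eval z =
          Real.sqrt z *
              ((1 + Real.sqrt z) ^ (m + ℓ + 1) + (1 - Real.sqrt z) ^ (m + ℓ + 1)) /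
            ((1 + Real.sqrt z) ^ (m + ℓ + 1) - (1 - Real.sqrt z) ^ (m + ℓ + 1))) ∧
      (∀ x : ℝ, p.IsRoot x ↔ ∃ j ∈ Finset.Icc 1 m,
        x = -(Real.tan ((2 * (j : ℝ) - 1) * Real.pi / (2 * ((m : ℝ) + ℓ + 1)))) ^ 2) :=
  pade_sqrt_zeros_general m ℓ hℓ
end

section
/- Let r̂ : (0,∞) → (0,∞) be a function and define the recursion f_{k+1}(z) = f_k(z) r̂(z / f_k(z)^2) with f_0(z) = 1, and ŝ(w) = w / r̂(w^2). If g_k(z) := sqrt(z)/f_k(z), then g_{k+1}(z) = ŝ(g_k(z)) for all k and all z > 0. In other words, the multiplicative square-root recursion for f_k is conjugate (via g = sqrt(z)/f) to iteration of the sign-function approximant ŝ. -/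
theorem sqrt_div_mul_apply_div_sq (r : ℝ → ℝ) {z : ℝ} (hz : 0 ≤ z) (F : ℝ) :
    √z / (F * r (z / F ^ 2)) = √z / F / r ((√z / F) ^ 2) := by
  rw [div_pow, Real.sq_sqrt hz, div_div]

theorem sqrt_recursion_conjugate_sign_general (rhat : ℝ → ℝ)
    (f : ℕ → ℝ → ℝ)
    (hrec : ∀ k z, f (k + 1) z = f k z * rhat (z / (f k z) ^ 2))
    (shat : ℝ → ℝ) (hs : ∀ w, shat w = w / rhat (w ^ 2))
    (g : ℕ → ℝ → ℝ) (hg : ∀ k z, g k z = Real.sqrt z / f k z) :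
    ∀ k, ∀ z : ℝ, 0 < z → g (k + 1) z = shat (g k z) := by
  intro k z hz
  rw [hg, hg, hs, hrec]
  exact sqrt_div_mul_apply_div_sq rhat hz.le (f k z)

/-- The multiplicative square-root recursion `f (k+1) z = f k z * r̂ (z / (f k z)^2)`,
`f 0 z = 1`, is conjugate via `g k z = √z / f k z` to iteration of the sign-function
approximant `ŝ w = w / r̂ (w^2)`. -/
theorem sqrt_recursion_conjugate_sign (rhat : ℝ → ℝ) (hr : ∀ w, 0 < w → 0 < rhat w)
    (f : ℕ → ℝ → ℝ) (h0 : ∀ z, f 0 z = 1)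
    (hrec : ∀ k z, f (k + 1) z = f k z * rhat (z / (f k z) ^ 2))
    (shat : ℝ → ℝ) (hs : ∀ w, shat w = w / rhat (w ^ 2))
    (g : ℕ → ℝ → ℝ) (hg : ∀ k z, g k z = Real.sqrt z / f k z) :
    ∀ k, ∀ z : ℝ, 0 < z → g (k + 1) z = shat (g k z) :=
  sqrt_recursion_conjugate_sign_general rhat f hrec shat hs g hg
end

section
/- Let α ∈ (0,1) and define α_{k+1} = 2/(α_k^{1/2} + α_k^{-1/2}) with α_0 = α. Then α_k ∈ (0,1) for all k, (α_k) is strictly increasing, and 1 - α_{k+1} ≤ (1 - α_k)^2 / (2 α_k), so that α_k → 1 quadratically. -/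
/-!
Writing `x = s²` with `s > 0`, the map `f(x) = 2 / (√x + 1/√x)` is `2s / (1 + s²)`, so that
`1 - f(x) = (1 - s)² / (1 + s²)`. This identity shows at once that `f` maps `(0,1)` into itself,
moves every point of `(0,1)` upwards, and satisfies the quadratic bound, since
`(1 - x)² / (2x) = (1 - s)² (1 + s)² / (2s²)`. It also gives `1 - f(x) ≤ (1 - √x)(1 - x)`;
along the increasing sequence `√(α k) ≥ √a`, so `1 - α k` decays at least geometrically with
ratio `1 - √a < 1`.
-/

open Real Filter Set

noncomputable def zolotarevStep (x : ℝ) : ℝ := 2 / (√x + (√x)⁻¹)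

lemma one_sub_zolotarevStep_sq {s : ℝ} (hs : 0 < s) :
    1 - zolotarevStep (s ^ 2) = (1 - s) ^ 2 / (1 + s ^ 2) := by
  rw [zolotarevStep, sqrt_sq hs.le]
  field_simp
  ring

lemma exists_sq_eq_of_pos {x : ℝ} (hx : 0 < x) : ∃ s, 0 < s ∧ s ^ 2 = x :=
  ⟨√x, sqrt_pos.mpr hx, sq_sqrt hx.le⟩

lemma zolotarevStep_lt_one {x : ℝ} (hx0 : 0 < x) (hx1 : x ≠ 1) : zolotarevStep x < 1 := by
  obtain ⟨s, hs, rfl⟩ := exists_sq_eq_of_pos hx0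
  have hs1 : 1 - s ≠ 0 := fun h => hx1 (by rw [← sub_eq_zero.mp h]; ring)
  have : 0 < 1 - zolotarevStep (s ^ 2) := by
    rw [one_sub_zolotarevStep_sq hs]
    positivity
  linarith

lemma lt_zolotarevStep {x : ℝ} (hx0 : 0 < x) (hx1 : x < 1) : x < zolotarevStep x := by
  obtain ⟨s, hs, rfl⟩ := exists_sq_eq_of_pos hx0
  have hs1 : s < 1 := by nlinarith
  suffices (1 - s) ^ 2 / (1 + s ^ 2) < 1 - s ^ 2 by linarith [one_sub_zolotarevStep_sq hs]
  rw [div_lt_iff₀ (by positivity)]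
  nlinarith [mul_pos hs (sub_pos.mpr hs1), mul_pos (mul_pos hs hs) (sub_pos.mpr hs1)]

lemma one_sub_zolotarevStep_le_sq_div {x : ℝ} (hx : 0 < x) :
    1 - zolotarevStep x ≤ (1 - x) ^ 2 / (2 * x) := by
  obtain ⟨s, hs, rfl⟩ := exists_sq_eq_of_pos hx
  rw [one_sub_zolotarevStep_sq hs, div_le_div_iff₀ (by positivity) (by positivity)]
  have : 2 * s ^ 2 ≤ (1 + s) ^ 2 * (1 + s ^ 2) := by nlinarith [sq_nonneg s, hs]
  calc (1 - s) ^ 2 * (2 * s ^ 2) ≤ (1 - s) ^ 2 * ((1 + s) ^ 2 * (1 + s ^ 2)) := by gcongr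
    _ = (1 - s ^ 2) ^ 2 * (1 + s ^ 2) := by ring

lemma one_sub_zolotarevStep_le_mul {x : ℝ} (hx : 0 < x) :
    1 - zolotarevStep x ≤ (1 - √x) * (1 - x) := by
  obtain ⟨s, hs, rfl⟩ := exists_sq_eq_of_pos hx
  rw [one_sub_zolotarevStep_sq hs, sqrt_sq hs.le, div_le_iff₀ (by positivity)]
  have : 1 ≤ (1 + s) * (1 + s ^ 2) := by nlinarith [sq_nonneg s, hs]
  calc (1 - s) ^ 2 = (1 - s) ^ 2 * 1 := by ring
    _ ≤ (1 - s) ^ 2 * ((1 + s) * (1 + s ^ 2)) := by gcongr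
    _ = (1 - s) * (1 - s ^ 2) * (1 + s ^ 2) := by ring

section Iterates

variable {α : ℕ → ℝ}

lemma zolotarev_iterate_mem_Ioo (hrec : ∀ k, α (k + 1) = zolotarevStep (α k))
    (h0 : α 0 ∈ Ioo 0 1) (k : ℕ) : α k ∈ Ioo 0 1 := by
  induction k with
  | zero => exact h0
  | succ k ih =>
    rw [hrec]
    exact ⟨ih.1.trans (lt_zolotarevStep ih.1 ih.2), zolotarevStep_lt_one ih.1 ih.2.ne⟩

lemma zolotarev_iterate_strictMono (hrec : ∀ k, α (k + 1) = zolotarevStep (α k))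
    (hmem : ∀ k, α k ∈ Ioo 0 1) : StrictMono α :=
  strictMono_nat_of_lt_succ fun k => hrec k ▸ lt_zolotarevStep (hmem k).1 (hmem k).2

lemma one_sub_zolotarev_iterate_le_geometric (hrec : ∀ k, α (k + 1) = zolotarevStep (α k))
    (hmem : ∀ k, α k ∈ Ioo 0 1) (k : ℕ) :
    1 - α k ≤ (1 - √(α 0)) ^ k * (1 - α 0) := by
  induction k with
  | zero => simp
  | succ k ih =>
    have hsqrt : √(α 0) ≤ √(α k) :=
      sqrt_le_sqrt ((zolotarev_iterate_strictMono hrec hmem).monotone (Nat.zero_le k))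
    have hgap : 0 ≤ 1 - α k := sub_nonneg.mpr (hmem k).2.le
    have hratio : 0 ≤ 1 - √(α 0) := sub_nonneg.mpr (sqrt_le_one.mpr (hmem 0).2.le)
    calc 1 - α (k + 1) ≤ (1 - √(α k)) * (1 - α k) :=
          hrec k ▸ one_sub_zolotarevStep_le_mul (hmem k).1
      _ ≤ (1 - √(α 0)) * ((1 - √(α 0)) ^ k * (1 - α 0)) := by gcongr
      _ = (1 - √(α 0)) ^ (k + 1) * (1 - α 0) := by ring

lemma zolotarev_iterate_tendsto_one (hrec : ∀ k, α (k + 1) = zolotarevStep (α k))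
    (hmem : ∀ k, α k ∈ Ioo 0 1) : Tendsto α atTop (nhds 1) := by
  have hratio : Tendsto (fun k => (1 - √(α 0)) ^ k) atTop (nhds 0) :=
    tendsto_pow_atTop_nhds_zero_of_lt_one (sub_nonneg.mpr (sqrt_le_one.mpr (hmem 0).2.le))
      (sub_lt_self 1 (sqrt_pos.mpr (hmem 0).1))
  have hlower : Tendsto (fun k => 1 - (1 - √(α 0)) ^ k * (1 - α 0)) atTop (nhds 1) := by
    simpa using tendsto_const_nhds.sub (hratio.mul_const (1 - α 0))
  refine tendsto_of_tendsto_of_tendsto_of_le_of_le hlower tendsto_const_nhds (fun k => ?_)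
    fun k => (hmem k).2.le
  linarith [one_sub_zolotarev_iterate_le_geometric hrec hmem k]

end Iterates

/-- The scaling-parameter recursion of the type (1,0) Zolotarev iteration:
`α (k+1) = 2/(√(α k) + (√(α k))⁻¹)`, `α 0 = a ∈ (0,1)`.  All iterates lie in `(0,1)`,
the sequence is strictly increasing, and `1 - α (k+1) ≤ (1 - α k)²/(2 α k)`, so that
`α k → 1` quadratically. -/
theorem zolotarev_scaling_parameter (a : ℝ) (ha : a ∈ Set.Ioo (0 : ℝ) 1)
    (α : ℕ → ℝ) (h0 : α 0 = a)
    (hrec : ∀ k, α (k + 1) = 2 / (Real.sqrt (α k) + (Real.sqrt (α k))⁻¹)) :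
    (∀ k, α k ∈ Set.Ioo (0 : ℝ) 1) ∧ StrictMono α ∧
      (∀ k, 1 - α (k + 1) ≤ (1 - α k) ^ 2 / (2 * α k)) ∧
      Filter.Tendsto α Filter.atTop (nhds 1) := by
  have hmem := zolotarev_iterate_mem_Ioo hrec (h0 ▸ ha)
  refine ⟨hmem, zolotarev_iterate_strictMono hrec hmem, fun k => ?_,
    zolotarev_iterate_tendsto_one hrec hmem⟩
  exact hrec k ▸ one_sub_zolotarevStep_le_sq_div (hmem k).1
end
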